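/- Let A be a skew left brace, X ⊆ A a subset, and n, m ∈ ℕ. Define R_0(X,A) = X and R_{k+1}(X,A) as the additive subgroup generated by R_k(X,A)*A and [R_k(X,A),A]_+. Then R_m(X,A) ⊆ Soc_n(A) if and only if X ⊆ Soc_{m+n}(A). -/
import Mathlib


/-- A skew left brace: `(A,+)` and `(A,*)` are groups (the multiplicative
operation `*` plays the role of the circle operation `∘`) satisfying
`a ∘ (b + c) = a ∘ b - a + a ∘ c`. -/
class SkewBrace (A : Type*) extends AddGroup A, Group A where
  compat : ∀ a b c : A, a * (b + c) = a * b - a + a * c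

/-- The lambda map of a skew brace: `λ_a(b) = -a + a ∘ b`. -/
def lam {A : Type*} [SkewBrace A] (a b : A) : A := -a + a * b

/-- The star operation of a skew brace: `a * b := λ_a(b) - b`. -/
def starB {A : Type*} [SkewBrace A] (a b : A) : A := lam a b - b

/-- `X * Y`: the additive subgroup generated by `{x * y : x ∈ X, y ∈ Y}`. -/
def starSet {A : Type*} [SkewBrace A] (X Y : Set A) : AddSubgroup A :=
  AddSubgroup.closure {z : A | ∃ x ∈ X, ∃ y ∈ Y, z = starB x y}

/-- `[X, Y]_+`: the additive subgroup generated by additive commutators. -/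
def commSet {A : Type*} [SkewBrace A] (X Y : Set A) : AddSubgroup A :=
  AddSubgroup.closure {z : A | ∃ x ∈ X, ∃ y ∈ Y, z = x + y - x - y}

/-- The series `R_0(X,A) = X`, `R_{k+1}(X,A) = ⟨R_k(X,A) * A, [R_k(X,A), A]_+⟩`. -/
def Rset {A : Type*} [SkewBrace A] (X : Set A) : ℕ → Set A
  | 0 => X
  | k + 1 => ↑(starSet (Rset X k) Set.univ ⊔ commSet (Rset X k) Set.univ)

/-- The socle series: `Soc_0(A) = 0`, `Soc_{n+1}(A) = {x : x*a ∈ Soc_n(A) and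
[x,a]_+ ∈ Soc_n(A) for all a}`. -/
def socSeries (A : Type*) [SkewBrace A] : ℕ → Set A
  | 0 => {0}
  | n + 1 => {x : A | ∀ a : A, starB x a ∈ socSeries A n ∧ x + a - x - a ∈ socSeries A n}

section Aux
variable {A : Type*} [SkewBrace A]


lemma sb_mul_zero (a : A) : a * (0:A) = a := by
  have h := SkewBrace.compat a 0 0
  rw [add_zero] at h
  have h2 : (0:A) + a * 0 = a * 0 - a + a * 0 := by rw [zero_add]; exact h
  have h3 := (add_right_cancel h2).symm
  rw [sub_eq_zero] at h3
  exact h3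

lemma sb_zero_eq_one : (0:A) = 1 := by
  have := sb_mul_zero (1:A)
  rwa [one_mul] at this

lemma lam_add (a b c : A) : lam a (b + c) = lam a b + lam a c := by
  simp only [lam, SkewBrace.compat a b c, sub_eq_add_neg, add_assoc]

lemma lam_zero_right (a : A) : lam a 0 = 0 := by
  simp [lam, sb_mul_zero]

lemma lam_neg (a b : A) : lam a (-b) = -(lam a b) := by
  have h := lam_add a b (-b)
  rw [add_neg_cancel, lam_zero_right] at h
  exact (neg_eq_of_add_eq_zero_right h.symm).symm

lemma lam_sub (a b c : A) : lam a (b - c) = lam a b - lam a c := by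
  rw [sub_eq_add_neg, lam_add, lam_neg, sub_eq_add_neg]

lemma sb_mul_neg (a b : A) : a * (-b) = a - a * b + a := by
  have h := SkewBrace.compat a b (-b)
  rw [add_neg_cancel, sb_mul_zero] at h
  have h2 := eq_neg_add_of_add_eq h.symm
  rw [h2, neg_sub, sub_eq_add_neg]

lemma lam_mul (a b c : A) : lam (a * b) c = lam a (lam b c) := by
  simp only [lam, SkewBrace.compat, sb_mul_neg, mul_assoc, sub_eq_add_neg, add_assoc,
    neg_add_cancel_left, add_neg_cancel_left]

lemma lam_one (b : A) : lam (1:A) b = b := by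
  simp [lam, ← sb_zero_eq_one]

lemma lam_lam_inv (a b : A) : lam a (lam a⁻¹ b) = b := by
  rw [← lam_mul, mul_inv_cancel, lam_one]

lemma lam_inv_lam (a b : A) : lam a⁻¹ (lam a b) = b := by
  rw [← lam_mul, inv_mul_cancel, lam_one]

lemma mul_eq_add_lam (a b : A) : a * b = a + lam a b := by
  simp [lam, add_neg_cancel_left]

lemma add_eq_mul_lam (a b : A) : a + b = a * lam a⁻¹ b := by
  rw [mul_eq_add_lam, lam_lam_inv]

lemma lam_mul_inv (a : A) : lam a a⁻¹ = -a := by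
  have := mul_eq_add_lam a a⁻¹
  rw [mul_inv_cancel, ← sb_zero_eq_one] at this
  exact eq_neg_of_add_eq_zero_right this.symm

lemma lam_inv_self (a : A) : lam a⁻¹ a = -a⁻¹ := by
  have := mul_eq_add_lam a⁻¹ a
  rw [inv_mul_cancel, ← sb_zero_eq_one] at this
  exact eq_neg_of_add_eq_zero_right this.symm

lemma lam_eq_starB_add (a b : A) : lam a b = starB a b + b := by
  simp [starB, sub_add_cancel]


lemma lam_zero_left (b : A) : lam (0:A) b = b := by
  rw [sb_zero_eq_one]; exact lam_one b

lemma starB_zero_left (a : A) : starB (0:A) a = 0 := by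
  simp [starB, lam_zero_left]

lemma soc_zero_mem (n : ℕ) : (0:A) ∈ socSeries A n := by
  induction n with
  | zero => rfl
  | succ k ih =>
    intro a
    refine ⟨?_, ?_⟩
    · rw [starB_zero_left]; exact ih
    · have h : (0:A) + a - 0 - a = 0 := by simp
      rw [h]; exact ih

lemma soc_mono (n : ℕ) : socSeries A n ⊆ socSeries A (n+1) := by
  induction n with
  | zero =>
    intro x hx
    have hx0 : x = 0 := hx
    rw [hx0]; exact soc_zero_mem 1
  | succ k ih =>
    intro x hx a
    exact ⟨ih (hx a).1, ih (hx a).2⟩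

lemma soc_star_self (n : ℕ) (x : A) (hx : x ∈ socSeries A n) (a : A) :
    starB x a ∈ socSeries A n := by
  cases n with
  | zero =>
    have hx0 : x = 0 := hx
    rw [hx0, starB_zero_left]; exact rfl
  | succ k => exact soc_mono k (hx a).1

lemma soc_comm_self (n : ℕ) (x : A) (hx : x ∈ socSeries A n) (a : A) :
    x + a - x - a ∈ socSeries A n := by
  cases n with
  | zero =>
    have hx0 : x = 0 := hx
    rw [hx0]
    have h : (0:A) + a - 0 - a = 0 := by simp
    rw [h]; exact rfl
  | succ k => exact soc_mono k (hx a).2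

/-- decomposition of additive commutator of a sum -/
lemma comm_add (p q a : A) :
    (p + q) + a - (p + q) - a = p + (q + a - q - a) - p + (p + a - p - a) := by
  simp [sub_eq_add_neg, add_assoc, neg_add_rev, neg_neg, neg_add_cancel_left,
    add_neg_cancel_left]

lemma comm_lam (c z a : A) :
    lam c z + a - lam c z - a = lam c (z + lam c⁻¹ a - z - lam c⁻¹ a) := by
  rw [lam_sub, lam_sub, lam_add, lam_lam_inv]

lemma comm_conj (c z a : A) :
    (c + z - c) + a - (c + z - c) - a
      = c + (z + (-c + a + c) - z - (-c + a + c)) - c := by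
  simp [sub_eq_add_neg, add_assoc, neg_add_rev, neg_neg, neg_add_cancel_left,
    add_neg_cancel_left]

lemma comm_neg (x b : A) :
    (-x) + b - (-x) - b = (-x) + (-(x + b - x - b)) - (-x) := by
  simp [sub_eq_add_neg, add_assoc, neg_add_rev, neg_neg, neg_add_cancel_left,
    add_neg_cancel_left]

lemma soc_props (n : ℕ) :
    (∀ x ∈ socSeries A n, ∀ y ∈ socSeries A n, x + y ∈ socSeries A n) ∧
    (∀ x ∈ socSeries A n, -x ∈ socSeries A n) ∧
    (∀ c : A, ∀ x ∈ socSeries A n, lam c x ∈ socSeries A n) ∧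
    (∀ b : A, ∀ x ∈ socSeries A n, b + x - b ∈ socSeries A n) := by
  induction n with
  | zero =>
    refine ⟨?_, ?_, ?_, ?_⟩
    · intro x hx y hy
      have hx0 : x = 0 := hx
      have hy0 : y = 0 := hy
      rw [hx0, hy0, add_zero]; exact rfl
    · intro x hx
      have hx0 : x = 0 := hx
      rw [hx0, neg_zero]; exact rfl
    · intro c x hx
      have hx0 : x = 0 := hx
      rw [hx0, lam_zero_right]; exact rfl
    · intro b x hx
      have hx0 : x = 0 := hx
      rw [hx0]
      have h : b + (0:A) - b = 0 := by simp
      rw [h]; exact rfl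
  | succ n ih =>
    obtain ⟨hadd, hneg, hlam, hconj⟩ := ih
    -- multiplication closure
    have hmul : ∀ x ∈ socSeries A (n+1), ∀ y ∈ socSeries A (n+1),
        x * y ∈ socSeries A (n+1) := by
      intro x hx y hy a
      constructor
      · have e : starB (x*y) a = lam x (starB y a) + starB x a := by
          simp only [starB, lam_mul]
          rw [lam_eq_starB_add y a, lam_add, add_sub_assoc, add_sub_cancel_right]
        rw [e]
        exact hadd _ (hlam _ _ (hy a).1) _ (hx a).1
      · have e : x * y = x + starB x y + y := by
          rw [mul_eq_add_lam, lam_eq_starB_add, ← add_assoc]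
        have h1 : (x + starB x y) + a - (x + starB x y) - a ∈ socSeries A n := by
          rw [comm_add]
          exact hadd _ (hconj _ _ (soc_comm_self n _ (hx y).1 a)) _ (hx a).2
        rw [e, comm_add]
        exact hadd _ (hconj _ _ (hy a).2) _ h1
    -- adding an element of the previous term
    have hL1 : ∀ g ∈ socSeries A (n+1), ∀ s ∈ socSeries A n,
        g + s ∈ socSeries A (n+1) := by
      intro g hg s hs
      rw [add_eq_mul_lam]
      exact hmul g hg _ (soc_mono n (hlam _ _ hs))
    -- additive conjugation closure at level n+1
    have hconj' : ∀ b : A, ∀ x ∈ socSeries A (n+1),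
        b + x - b ∈ socSeries A (n+1) := by
      intro b x hx
      have mem : -x + (b + x - b) ∈ socSeries A n := by
        have e2 : -x + (b + x - b) = (-x) + (-(x + b - x - b)) - (-x) := by
          simp [sub_eq_add_neg, add_assoc, neg_add_rev, neg_neg, neg_add_cancel_left,
            add_neg_cancel_left]
        rw [e2]
        exact hconj _ _ (hneg _ (hx b).2)
      have e : b + x - b = x + (-x + (b + x - b)) := (add_neg_cancel_left x _).symm
      rw [e]
      exact hL1 x hx _ mem
    -- commutators of lambda images
    have hcommlam : ∀ c z : A, (∀ b : A, z + b - z - b ∈ socSeries A n) →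
        ∀ a : A, lam c z + a - lam c z - a ∈ socSeries A n := by
      intro c z hz a
      rw [comm_lam]
      exact hlam _ _ (hz _)
    -- lambda closure at level n+1
    have hlam' : ∀ c : A, ∀ y ∈ socSeries A (n+1),
        lam c y ∈ socSeries A (n+1) := by
      intro c y hy
      have hs : starB y (-c⁻¹) ∈ socSeries A n := (hy _).1
      have hσ : lam c (starB y (-c⁻¹)) ∈ socSeries A n := hlam _ _ hs
      -- the conjugate t = c * y * c⁻¹
      have ht : c * y * c⁻¹ ∈ socSeries A (n+1) := by
        have hcz : ∀ b : A, lam c y + b - lam c y - b ∈ socSeries A n :=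
          hcommlam c y (fun b => (hy b).2)
        -- key identity
        have e1 : lam (c*y*c⁻¹) c = lam c (starB y (-c⁻¹)) + c := by
          rw [lam_mul, lam_mul, lam_inv_self, lam_eq_starB_add y (-c⁻¹), lam_add,
            lam_neg, lam_mul_inv, neg_neg]
        have e3 : (c*y*c⁻¹) * c = c * y := by
          rw [mul_assoc, inv_mul_cancel, mul_one]
        have e4 : (c*y*c⁻¹) + (lam c (starB y (-c⁻¹)) + c) = c + lam c y := by
          rw [← e1, ← mul_eq_add_lam, ← mul_eq_add_lam, e3]
        have key : lam c y = -c + ((c*y*c⁻¹) + (lam c (starB y (-c⁻¹)) + c)) :=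
          eq_neg_add_of_add_eq e4.symm
        have tval : c*y*c⁻¹ = (c + lam c y - c) + (-(lam c (starB y (-c⁻¹)))) := by
          rw [key]
          simp [sub_eq_add_neg, add_assoc, neg_add_rev, neg_neg, neg_add_cancel_left,
            add_neg_cancel_left]
        intro a
        constructor
        · have e : starB (c*y*c⁻¹) a = lam c (starB y (lam c⁻¹ a)) := by
            simp only [starB, lam_mul]
            rw [lam_eq_starB_add y (lam c⁻¹ a), lam_add, lam_lam_inv, add_sub_cancel_right,
              add_sub_cancel_right]
          rw [e]
          exact hlam _ _ (hy _).1
        · have h2 : (c + lam c y - c) + a - (c + lam c y - c) - a ∈ socSeries A n := by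
            rw [comm_conj]
            exact hconj _ _ (hcz _)
          rw [tval, comm_add]
          exact hadd _ (hconj _ _ (soc_comm_self n _ (hneg _ hσ) a)) _ h2
      -- now express lam c y as a conjugate of t + σ
      have e1 : lam (c*y*c⁻¹) c = lam c (starB y (-c⁻¹)) + c := by
        rw [lam_mul, lam_mul, lam_inv_self, lam_eq_starB_add y (-c⁻¹), lam_add,
          lam_neg, lam_mul_inv, neg_neg]
      have e3 : (c*y*c⁻¹) * c = c * y := by
        rw [mul_assoc, inv_mul_cancel, mul_one]
      have e4 : (c*y*c⁻¹) + (lam c (starB y (-c⁻¹)) + c) = c + lam c y := by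
        rw [← e1, ← mul_eq_add_lam, ← mul_eq_add_lam, e3]
      have key : lam c y = -c + ((c*y*c⁻¹) + (lam c (starB y (-c⁻¹)) + c)) :=
        eq_neg_add_of_add_eq e4.symm
      have e5 : lam c y = (-c) + ((c*y*c⁻¹) + lam c (starB y (-c⁻¹))) - (-c) := by
        rw [key]
        simp [sub_eq_add_neg, add_assoc, neg_neg]
      rw [e5]
      exact hconj' (-c) _ (hL1 _ ht _ hσ)
    -- inverse closure at level n+1
    have hinv : ∀ x ∈ socSeries A (n+1), x⁻¹ ∈ socSeries A (n+1) := by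
      intro x hx
      have exi : lam x⁻¹ (-x) = x⁻¹ := by
        rw [lam_neg, lam_inv_self, neg_neg]
      have hnx : ∀ b : A, (-x) + b - (-x) - b ∈ socSeries A n := by
        intro b
        rw [comm_neg]
        exact hconj _ _ (hneg _ (hx b).2)
      intro a
      constructor
      · have e : starB x⁻¹ a = lam x⁻¹ (-(starB x a)) := by
          simp only [starB]
          rw [neg_sub, lam_sub, lam_inv_lam]
        rw [e]
        exact hlam _ _ (hneg _ (hx a).1)
      · rw [← exi]
        exact hcommlam _ _ hnx a
    -- negation closure at level n+1
    have hneg' : ∀ x ∈ socSeries A (n+1), -x ∈ socSeries A (n+1) := by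
      intro x hx
      rw [← lam_mul_inv]
      exact hlam' x _ (hinv x hx)
    -- addition closure at level n+1
    have hadd' : ∀ x ∈ socSeries A (n+1), ∀ y ∈ socSeries A (n+1),
        x + y ∈ socSeries A (n+1) := by
      intro x hx y hy
      have e : x + y = (x * y) + (-y + (-(starB x y)) + y) := by
        rw [mul_eq_add_lam, lam_eq_starB_add]
        simp [sub_eq_add_neg, add_assoc, neg_add_rev, neg_neg, neg_add_cancel_left,
          add_neg_cancel_left]
      have hs' : -y + (-(starB x y)) + y ∈ socSeries A n := by
        have e2 : -y + (-(starB x y)) + y = (-y) + (-(starB x y)) - (-y) := by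
          rw [sub_neg_eq_add]
        rw [e2]
        exact hconj _ _ (hneg _ (hx y).1)
      rw [e]
      exact hL1 _ (hmul x hx y hy) _ hs'
    exact ⟨hadd', hneg', hlam', hconj'⟩


/-- `Soc_n(A)` as an additive subgroup. -/
def socSub (A : Type*) [SkewBrace A] (n : ℕ) : AddSubgroup A where
  carrier := socSeries A n
  zero_mem' := soc_zero_mem n
  add_mem' := fun hx hy => (soc_props n).1 _ hx _ hy
  neg_mem' := fun hx => (soc_props n).2.1 _ hx

lemma step_iff (S : Set A) (n : ℕ) :
    ↑(starSet S Set.univ ⊔ commSet S Set.univ) ⊆ socSeries A n ↔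
      S ⊆ socSeries A (n + 1) := by
  constructor
  · intro h x hx
    intro a
    constructor
    · refine h ?_
      refine SetLike.coe_subset_coe.mpr le_sup_left ?_
      exact AddSubgroup.subset_closure ⟨x, hx, a, Set.mem_univ a, rfl⟩
    · refine h ?_
      refine SetLike.coe_subset_coe.mpr le_sup_right ?_
      exact AddSubgroup.subset_closure ⟨x, hx, a, Set.mem_univ a, rfl⟩
  · intro h
    have hle : starSet S Set.univ ⊔ commSet S Set.univ ≤ socSub A n := by
      refine sup_le ?_ ?_
      · refine AddSubgroup.closure_le _ |>.mpr ?_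
        rintro z ⟨x, hx, y, -, rfl⟩
        exact (h hx y).1
      · refine AddSubgroup.closure_le _ |>.mpr ?_
        rintro z ⟨x, hx, y, -, rfl⟩
        exact (h hx y).2
    exact fun z hz => hle hz


end Aux

/-- `R_m(X,A) ⊆ Soc_n(A)` if and only if `X ⊆ Soc_{m+n}(A)`. -/
theorem Rset_subset_soc_iff {A : Type*} [SkewBrace A] (X : Set A) (n m : ℕ) :
    Rset X m ⊆ socSeries A n ↔ X ⊆ socSeries A (m + n) := by
  induction m generalizing n with
  | zero => rw [zero_add]; exact Iff.rfl
  | succ m ih =>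
    have h : Rset X (m+1) = ↑(starSet (Rset X m) Set.univ ⊔ commSet (Rset X m) Set.univ) := rfl
    rw [h, step_iff, ih (n+1)]
    have harith : m + (n + 1) = m + 1 + n := by omega
    rw [harith]
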